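/- Let φ ∈ Γ₀(ℝ) be even and set f = φ ∘ ‖·‖ on a real Hilbert space H; let γ > 0 and (x,η) ∈ H × ℝ. If η + γ φ*(P_{cl(dom φ*)}(‖x‖/γ)) ≤ 0 then prox_{γ𝑓̃}(x,η) = ((1 − γ P_{cl(dom φ*)}(‖x‖/γ)/‖x‖) x, 0) when x ≠ 0, and (0,0) when x = 0. -/

import Mathlib

open scoped RealInnerProductSpace
open Filter Topology

/-- Fenchel conjugate of `f` on a real inner product space. -/
noncomputable def fenchel {H : Type*} [NormedAddCommGroup H] [InnerProductSpace ℝ H]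
    (f : H → EReal) (u : H) : EReal :=
  ⨆ x : H, ((⟪x, u⟫ : ℝ) : EReal) - f x

/-- Epigraph of an `EReal`-valued function. -/
def epi {E : Type*} (f : E → EReal) : Set (E × ℝ) := {p | f p.1 ≤ (p.2 : EReal)}

/-- `f` is proper, lower semicontinuous and convex. -/
def ProperLscConvex {E : Type*} [AddCommGroup E] [Module ℝ E] [TopologicalSpace E]
    (f : E → EReal) : Prop :=
  (∀ x, f x ≠ ⊥) ∧ (∃ x, f x ≠ ⊤) ∧ LowerSemicontinuous f ∧ Convex ℝ (epi f)

/-- Effective domain. -/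
def edom {E : Type*} (f : E → EReal) : Set E := {x | f x ≠ ⊤}

/-- Recession function of a proper lsc convex function:
`rec f x = sup_{y ∈ dom f} (f (y + x) - f y)`. -/
noncomputable def recFn {E : Type*} [AddCommGroup E] (f : E → EReal) (x : E) : EReal :=
  ⨆ (y : E) (_ : f y ≠ ⊤), f (y + x) - f y

/-- Perspective of `f`. -/
noncomputable def persp {E : Type*} [AddCommGroup E] [Module ℝ E] (f : E → EReal) :
    E × ℝ → EReal := fun p =>
  if 0 < p.2 then (p.2 : EReal) * f (p.2⁻¹ • p.1)
  else if p.2 = 0 then recFn f p.1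
  else ⊤

/-- `p` is the proximal point `prox_{γ f} x`, i.e. the minimizer of
`γ f(y) + ½‖x - y‖²`. -/
def IsProx {H : Type*} [NormedAddCommGroup H] (f : H → EReal) (γ : ℝ) (x p : H) : Prop :=
  ∀ y : H, (γ : EReal) * f p + ((‖x - p‖ ^ 2 / 2 : ℝ) : EReal)
    ≤ (γ : EReal) * f y + ((‖x - y‖ ^ 2 / 2 : ℝ) : EReal)

/-- `p` is the metric projection of `x` onto `C`. -/
def IsProj {H : Type*} [NormedAddCommGroup H] (C : Set H) (x p : H) : Prop :=
  p ∈ C ∧ ∀ y ∈ C, ‖x - p‖ ≤ ‖x - y‖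

/-- Proximity operator on `H ⊕ ℝ` (with the Hilbert direct-sum norm
`‖(x,η)‖² = ‖x‖² + η²`). -/
def IsProx2 {H : Type*} [NormedAddCommGroup H] (F : H × ℝ → EReal) (γ : ℝ)
    (x : H) (η : ℝ) (p : H) (μ : ℝ) : Prop :=
  ∀ (y : H) (ν : ℝ),
    (γ : EReal) * F (p, μ) + (((‖x - p‖ ^ 2 + (η - μ) ^ 2) / 2 : ℝ) : EReal)
      ≤ (γ : EReal) * F (y, ν) + (((‖x - y‖ ^ 2 + (η - ν) ^ 2) / 2 : ℝ) : EReal)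

/-- Fenchel conjugate on `H ⊕ ℝ` with `⟪(x,η),(u,χ)⟫ = ⟪x,u⟫ + ηχ`. -/
noncomputable def fenchel2 {H : Type*} [NormedAddCommGroup H] [InnerProductSpace ℝ H]
    (F : H × ℝ → EReal) (u : H) (χ : ℝ) : EReal :=
  ⨆ p : H × ℝ, ((⟪p.1, u⟫ + p.2 * χ : ℝ) : EReal) - F p

/-- Support function of a set. -/
noncomputable def suppFn {H : Type*} [NormedAddCommGroup H] [InnerProductSpace ℝ H]
    (C : Set H) (u : H) : EReal :=
  ⨆ x ∈ C, ((⟪x, u⟫ : ℝ) : EReal)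


/-!
Put `u = (q / ‖x‖) • x` and `p = x - γ • u`. The prox inequality at `(p, 0)` follows once
`(x - p, η) = γ (u, η / γ)` is a subgradient of `γ f̃` there. Fenchel–Young gives
`f̃ (y, ν) ≥ ⟪y, u⟫ - ν f*(u)` (for `ν = 0` because `rec f` majorizes `⟪·, u⟫` whenever
`u ∈ dom f*`), and `f*(u) ≤ φ*(‖u‖) ≤ φ*(q) ≤ -η / γ`; so it remains to show
`rec f p ≤ ⟪p, u⟫`. If `q = ‖x‖ / γ` then `p = 0`. Otherwise `‖x‖ / γ` lies outside the
symmetric interval `cl dom φ*`, whence `dom φ* ⊆ (-∞, q]` and `φ` is finite (a bounded `dom φ`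
would make `φ*` finite everywhere). A secant slope `m > q` of `φ` on `[0, ∞)` would give
`φ ≥ m · id - K`, i.e. `m ∈ dom φ*`; so `φ (s + t) ≤ φ s + q t`, and `rec f p ≤ q ‖p‖ = ⟪p, u⟫`.
-/

theorem coe_sub_le_iff_coe_sub_le {a K : ℝ} {e : EReal} :
    (a : EReal) - e ≤ K ↔ ((a - K : ℝ) : EReal) ≤ e := by
  induction e using EReal.rec with
  | bot => simpa using (EReal.coe_sub a K ▸ EReal.coe_ne_bot (a - K))
  | top => simp
  | coe b => norm_cast; constructor <;> intro h <;> linarith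

theorem convex_sublevel_of_convex_epi {E : Type*} [AddCommGroup E] [Module ℝ E] {g : E → EReal}
    (hg : Convex ℝ (epi g)) (ρ : ℝ) : Convex ℝ {z | g z ≤ ρ} := by
  intro a ha b hb s t hs ht hst
  simpa [epi, ← add_mul, hst] using hg (x := (a, ρ)) (y := (b, ρ)) ha hb hs ht hst

theorem recFn_zero_le {E : Type*} [AddCommGroup E] (f : E → EReal) : recFn f 0 ≤ 0 := by
  simpa [recFn] using fun _ _ => EReal.sub_self_le_zero

section Conjugate

variable {H : Type*} [NormedAddCommGroup H] [InnerProductSpace ℝ H] {f : H → EReal}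

theorem fenchel_le_coe_iff {u : H} {K : ℝ} :
    fenchel f u ≤ K ↔ ∀ z, ((⟪z, u⟫ - K : ℝ) : EReal) ≤ f z := by
  simp only [fenchel, iSup_le_iff, coe_sub_le_iff_coe_sub_le]

theorem coe_inner_sub_le_fenchel (z u : H) : ((⟪z, u⟫ : ℝ) : EReal) - f z ≤ fenchel f u :=
  le_iSup (fun z => ((⟪z, u⟫ : ℝ) : EReal) - f z) z

theorem fenchel_ne_bot {z : H} (hz : f z ≠ ⊤) (u : H) : fenchel f u ≠ ⊥ := by
  refine ne_bot_of_le_ne_bot ?_ (coe_inner_sub_le_fenchel z u)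
  induction hfz : f z using EReal.rec <;> simp_all [← EReal.coe_sub]

theorem convex_epi_fenchel (f : H → EReal) : Convex ℝ (epi (fenchel f)) := by
  rintro ⟨u, K⟩ hu ⟨v, L⟩ hv a b ha hb hab
  simp only [epi, fenchel_le_coe_iff] at hu hv ⊢
  intro z
  have hcomb : ⟪z, a • u + b • v⟫ - (a * K + b * L)
      = a * (⟪z, u⟫ - K) + b * (⟪z, v⟫ - L) := by
    rw [inner_add_right, real_inner_smul_right, real_inner_smul_right]; ring
  simp only [Prod.fst_add, Prod.snd_add, Prod.smul_fst, Prod.smul_snd, smul_eq_mul, hcomb]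
  rcases le_total (⟪z, u⟫ - K) (⟪z, v⟫ - L) with h | h
  · refine le_trans ?_ (hv z)
    exact_mod_cast (Convex.combo_le_max _ _ ha hb hab).trans (max_eq_right h).le
  · refine le_trans ?_ (hu z)
    exact_mod_cast (Convex.combo_le_max _ _ ha hb hab).trans (max_eq_left h).le

theorem convex_edom_of_convex_epi {g : H → EReal} (hg : Convex ℝ (epi g)) :
    Convex ℝ (edom g) := by
  have : edom g = Prod.fst '' epi g := by
    ext u
    simp only [edom, epi, Set.mem_ofPred_eq, Set.mem_image, Prod.exists, exists_and_right,
      exists_eq_right]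
    refine ⟨fun h => ?_, fun ⟨K, hK⟩ => ne_top_of_le_ne_top (EReal.coe_ne_top K) hK⟩
    obtain ⟨K, hK, -⟩ := EReal.lt_iff_exists_real_btwn.1 (lt_top_iff_ne_top.2 h)
    exact ⟨K, hK.le⟩
  rw [this]
  exact hg.linear_image (LinearMap.fst ℝ H ℝ)

theorem inner_le_recFn {u : H} {B : ℝ} (hB : fenchel f u = B) (y : H) :
    ((⟪y, u⟫ : ℝ) : EReal) ≤ recFn f y := by
  refine EReal.ge_of_forall_gt_iff_ge.1 fun r hr => ?_
  have hlt : ((B - (⟪y, u⟫ - r) : ℝ) : EReal) < fenchel f u := by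
    rw [hB]; exact_mod_cast (by linarith [EReal.coe_lt_coe_iff.1 hr] : B - (⟪y, u⟫ - r) < B)
  obtain ⟨z, hz⟩ := lt_iSup_iff.1 hlt
  have hzy := fenchel_le_coe_iff.1 hB.le (z + y)
  induction hfz : f z using EReal.rec with
  | bot => simpa [hfz, hB] using coe_inner_sub_le_fenchel (f := f) z u
  | top => simp [hfz] at hz
  | coe w =>
    rw [hfz, ← EReal.coe_sub, EReal.coe_lt_coe_iff] at hz
    refine le_trans ?_ (le_iSup₂_of_le z (by simp [hfz]) (EReal.sub_le_sub hzy le_rfl))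
    rw [hfz, ← EReal.coe_sub, EReal.coe_le_coe_iff, inner_add_left]
    linarith

theorem inner_sub_mul_le_persp {u : H} {B : ℝ} (hB : fenchel f u = B) (y : H) (ν : ℝ) :
    ((⟪y, u⟫ - ν * B : ℝ) : EReal) ≤ persp f (y, ν) := by
  rcases lt_trichotomy ν 0 with hν | rfl | hν
  · simp [persp, hν.not_gt, hν.ne]
  · simpa [persp] using inner_le_recFn hB y
  · have h := fenchel_le_coe_iff.1 hB.le (ν⁻¹ • y)
    have hscale : ⟪y, u⟫ - ν * B = ν * (⟪ν⁻¹ • y, u⟫ - B) := by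
      rw [real_inner_smul_left]; field_simp
    simp only [persp, hν, if_true, hscale, EReal.coe_mul]
    exact mul_le_mul_of_nonneg_left h (EReal.coe_nonneg.2 hν.le)

theorem isProx2_of_subgradient {F : H × ℝ → EReal} {γ : ℝ} {x p : H} {η μ b : ℝ}
    (hb : F (p, μ) = b)
    (hsub : ∀ y ν, ((γ * b + ⟪x - p, y - p⟫ + (η - μ) * (ν - μ) : ℝ) : EReal) ≤ γ * F (y, ν)) :
    IsProx2 F γ x η p μ := by
  intro y ν
  have hexp : ‖x - y‖ ^ 2 = ‖x - p‖ ^ 2 - 2 * ⟪x - p, y - p⟫ + ‖y - p‖ ^ 2 := by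
    rw [← norm_sub_sq_real, sub_sub_sub_cancel_right]
  rw [hb, ← EReal.coe_mul, ← EReal.coe_add]
  calc ((γ * b + (‖x - p‖ ^ 2 + (η - μ) ^ 2) / 2 : ℝ) : EReal)
      ≤ ((γ * b + ⟪x - p, y - p⟫ + (η - μ) * (ν - μ) : ℝ) : EReal)
        + (((‖x - y‖ ^ 2 + (η - ν) ^ 2) / 2 : ℝ) : EReal) := by
        rw [← EReal.coe_add, EReal.coe_le_coe_iff, hexp]
        nlinarith [sq_nonneg ‖y - p‖, sq_nonneg (ν - μ)]
    _ ≤ γ * F (y, ν) + (((‖x - y‖ ^ 2 + (η - ν) ^ 2) / 2 : ℝ) : EReal) := by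
        gcongr; exact hsub y ν

theorem isProx2_persp_sub_smul {γ η : ℝ} (hγ : 0 < γ) {x u z : H} (hz : f z ≠ ⊤)
    (hη : (η : EReal) + γ * fenchel f u ≤ 0) (hrec : recFn f (x - γ • u) ≤ ⟪x - γ • u, u⟫) :
    IsProx2 (persp f) γ x η (x - γ • u) 0 := by
  have htop : fenchel f u ≠ ⊤ := fun h => by simp [h, EReal.coe_mul_top_of_pos hγ] at hη
  lift fenchel f u to ℝ using ⟨htop, fenchel_ne_bot hz u⟩ with B hB
  have hηB : η + γ * B ≤ 0 := by exact_mod_cast hη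
  have hp : persp f (x - γ • u, 0) = ⟪x - γ • u, u⟫ := by
    simpa [persp] using le_antisymm hrec (inner_le_recFn hB.symm _)
  refine isProx2_of_subgradient hp fun y ν => ?_
  rcases lt_or_ge ν 0 with hν | hν
  · simp [persp, hν.not_gt, hν.ne, EReal.coe_mul_top_of_pos hγ]
  · refine le_trans ?_ (mul_le_mul_of_nonneg_left (inner_sub_mul_le_persp hB.symm y ν)
      (EReal.coe_nonneg.2 hγ.le))
    have hinner : ⟪γ • u, y - (x - γ • u)⟫ = γ * (⟪y, u⟫ - ⟪x - γ • u, u⟫) := by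
      rw [real_inner_smul_left, inner_sub_right, real_inner_comm u y, real_inner_comm u]
    rw [← EReal.coe_mul, EReal.coe_le_coe_iff, sub_sub_cancel, hinner]
    nlinarith [mul_nonpos_of_nonneg_of_nonpos hν hηB]

end Conjugate

section EvenConvex

variable {φ : ℝ → EReal}

theorem le_of_abs_le_abs (hcvx : Convex ℝ (epi φ)) (heven : ∀ ξ, φ (-ξ) = φ ξ) {s r : ℝ}
    (h : |s| ≤ |r|) : φ s ≤ φ r := by
  have habs : φ |r| = φ r := by rcases abs_choice r with hr | hr <;> simp [hr, heven]
  refine EReal.le_of_forall_lt_iff_le.1 fun ρ hρ => ?_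
  have hmem : |r| ∈ {ξ | φ ξ ≤ ρ} := by simpa [habs] using hρ.le
  have hmem' : -|r| ∈ {ξ | φ ξ ≤ ρ} := by simpa [heven] using hmem
  exact (convex_sublevel_of_convex_epi hcvx ρ).ordConnected.out hmem' hmem (abs_le.1 h)

theorem fenchel_neg (heven : ∀ ξ, φ (-ξ) = φ ξ) (u : ℝ) : fenchel φ (-u) = fenchel φ u := by
  rw [fenchel, ← (Equiv.neg ℝ).iSup_comp]
  simp [fenchel, heven]

theorem zero_mem_closure_edom_fenchel (heven : ∀ ξ, φ (-ξ) = φ ξ) {q : ℝ}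
    (hq : q ∈ closure (edom (fenchel φ))) : (0 : ℝ) ∈ closure (edom (fenchel φ)) := by
  have hnegq : -q ∈ closure (edom (fenchel φ)) :=
    map_mem_closure continuous_neg hq fun v hv => by simpa [edom, fenchel_neg heven] using hv
  refine (convex_edom_of_convex_epi (convex_epi_fenchel φ)).closure.ordConnected.uIcc_subset
    hnegq hq (Set.mem_uIcc.2 ?_)
  rcases le_total 0 q with h | h
  · exact Or.inl ⟨by linarith, h⟩
  · exact Or.inr ⟨h, by linarith⟩

theorem fenchel_ne_top_of_eq_top (hcvx : Convex ℝ (epi φ)) (heven : ∀ ξ, φ (-ξ) = φ ξ) {c : ℝ}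
    (hc : φ 0 = c) {r : ℝ} (hr : φ r = ⊤) (v : ℝ) : fenchel φ v ≠ ⊤ := by
  refine ne_top_of_le_ne_top (EReal.coe_ne_top (|r| * |v| - c)) (fenchel_le_coe_iff.2 fun ξ => ?_)
  rcases le_or_gt |r| |ξ| with hξ | hξ
  · have htop : φ ξ = ⊤ := top_le_iff.1 (hr ▸ le_of_abs_le_abs hcvx heven hξ)
    simp [htop]
  · refine le_trans ?_ (hc ▸ le_of_abs_le_abs hcvx heven (by simp) : (c : EReal) ≤ φ ξ)
    have hinner : ⟪ξ, v⟫ ≤ |r| * |v| := calc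
      ⟪ξ, v⟫ ≤ |ξ| * |v| := by simpa [abs_mul, mul_comm] using le_abs_self (ξ * v)
      _ ≤ |r| * |v| := by gcongr
    exact EReal.coe_le_coe_iff.2 (by linarith)

end EvenConvex

section RealValued

variable {ψ : ℝ → ℝ}

theorem sub_le_mul_of_edom_fenchel_subset_Iic (hcvx : Convex ℝ (epi fun ξ => (ψ ξ : EReal)))
    (heven : ∀ ξ, ψ (-ξ) = ψ ξ) {q : ℝ}
    (hq : edom (fenchel fun ξ => (ψ ξ : EReal)) ⊆ Set.Iic q) {s t : ℝ} (hs : 0 ≤ s)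
    (ht : 0 ≤ t) : ψ (s + t) - ψ s ≤ q * t := by
  rcases ht.eq_or_lt with rfl | ht
  · simp
  have hconv : ConvexOn ℝ Set.univ ψ :=
    convexOn_iff_convex_epigraph.2 (by simpa [epi] using hcvx)
  have hmono : ∀ a b, 0 ≤ a → a ≤ b → ψ a ≤ ψ b := fun a b ha hab =>
    EReal.coe_le_coe_iff.1 (le_of_abs_le_abs hcvx (by simpa using heven)
      (by rwa [abs_of_nonneg ha, abs_of_nonneg (ha.trans hab)]))
  set m := (ψ (s + t) - ψ s) / t with hm
  have hm0 : 0 ≤ m := div_nonneg (sub_nonneg.2 (hmono s (s + t) hs (by linarith))) ht.le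
  have hmslope : m = (ψ (s + t) - ψ s) / (s + t - s) := by rw [add_sub_cancel_left]
  -- the chord through `s` and `s + t` stays below `ψ` outside `[s, s + t]`, and `ψ ≥ ψ s` inside
  have hlower : ∀ ξ, ψ s + m * (ξ - (s + t)) ≤ ψ ξ := by
    intro ξ
    rcases lt_or_ge ξ s with hξ | hξ
    · have h := hconv.secant_mono (Set.mem_univ s) (Set.mem_univ ξ) (Set.mem_univ (s + t))
        hξ.ne (by linarith) (by linarith)
      rw [← hmslope, div_le_iff_of_neg (by linarith)] at h
      nlinarith
    rcases le_or_gt ξ (s + t) with hξ' | hξ'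
    · nlinarith [hmono s ξ hs hξ]
    · have h := hconv.secant_mono (Set.mem_univ s) (Set.mem_univ (s + t)) (Set.mem_univ ξ)
        (by linarith) (by linarith) hξ'.le
      rw [← hmslope, le_div_iff₀ (by linarith)] at h
      nlinarith
  have hfin : fenchel (fun ξ => (ψ ξ : EReal)) m ≤ ((m * (s + t) - ψ s : ℝ) : EReal) :=
    fenchel_le_coe_iff.2 fun ξ => EReal.coe_le_coe_iff.2 (by
      have : ⟪ξ, m⟫ = ξ * m := by simp [mul_comm]
      linarith [hlower ξ])
  have hmq : m ≤ q := hq (ne_top_of_le_ne_top (EReal.coe_ne_top _) hfin)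
  rwa [hm, div_le_iff₀ ht] at hmq

theorem recFn_comp_norm_le {H : Type*} [NormedAddCommGroup H]
    (hcvx : Convex ℝ (epi fun ξ => (ψ ξ : EReal))) (heven : ∀ ξ, ψ (-ξ) = ψ ξ) {q : ℝ}
    (hq : edom (fenchel fun ξ => (ψ ξ : EReal)) ⊆ Set.Iic q) (p : H) :
    recFn (fun y : H => (ψ ‖y‖ : EReal)) p ≤ ((q * ‖p‖ : ℝ) : EReal) := by
  refine iSup₂_le fun z _ => ?_
  rw [← EReal.coe_sub, EReal.coe_le_coe_iff]
  have hmono : ψ ‖z + p‖ ≤ ψ (‖z‖ + ‖p‖) :=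
    EReal.coe_le_coe_iff.1 (le_of_abs_le_abs hcvx (by simpa using heven)
      (by rw [abs_norm, abs_of_nonneg (by positivity)]; exact norm_add_le z p))
  linarith [sub_le_mul_of_edom_fenchel_subset_Iic hcvx heven hq (norm_nonneg z) (norm_nonneg p)]

end RealValued

theorem IsProj.eq_of_mem {E : Type*} [NormedAddCommGroup E] {C : Set E} {x p : E}
    (h : IsProj C x p) (hx : x ∈ C) : p = x := by
  simpa [sub_eq_zero, eq_comm] using h.2 x hx

theorem IsProj.le_of_lt {C : Set ℝ} (hC : C.OrdConnected) {d q : ℝ} (h : IsProj C d q)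
    (hqd : q < d) {v : ℝ} (hv : v ∈ C) : v ≤ q := by
  by_contra! hqv
  have hmem : min v d ∈ C := hC.out h.1 hv ⟨le_min hqv.le hqd.le, min_le_left v d⟩
  have := h.2 _ hmem
  rw [Real.norm_of_nonneg (by linarith), Real.norm_of_nonneg (by linarith [min_le_right v d])]
    at this
  linarith [lt_min hqv hqd]

theorem recFn_comp_norm_le_of_isProj_lt {H : Type*} [NormedAddCommGroup H] {φ : ℝ → EReal}
    (hbot : ∀ ξ, φ ξ ≠ ⊥) (hcvx : Convex ℝ (epi φ))
    (heven : ∀ ξ, φ (-ξ) = φ ξ) (h0 : φ 0 ≠ ⊤) {d q : ℝ}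
    (hq : IsProj (closure (edom (fenchel φ))) d q) (hqd : q < d) (p : H) :
    recFn (fun y : H => φ ‖y‖) p ≤ ((q * ‖p‖ : ℝ) : EReal) := by
  have hC := (convex_edom_of_convex_epi (convex_epi_fenchel φ)).closure.ordConnected
  have hmax : edom (fenchel φ) ⊆ Set.Iic q := fun v hv => hq.le_of_lt hC hqd (subset_closure hv)
  have hfin : ∀ ξ, φ ξ ≠ ⊤ := fun ξ hξ => by
    have hd : d ∈ closure (edom (fenchel φ)) := subset_closure
      (fenchel_ne_top_of_eq_top hcvx heven (EReal.coe_toReal h0 (hbot 0)).symm hξ d)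
    exact hqd.ne (hq.eq_of_mem hd)
  lift φ to ℝ → ℝ using fun ξ => ⟨hfin ξ, hbot ξ⟩ with ψ
  exact recFn_comp_norm_le hcvx (by simpa using heven) hmax p

section Radial

variable {H : Type*} [NormedAddCommGroup H] [InnerProductSpace ℝ H] {φ : ℝ → EReal}

theorem fenchel_comp_norm_le_of_norm_le (heven : ∀ ξ, φ (-ξ) = φ ξ) {u : H} {q : ℝ}
    (hu : ‖u‖ ≤ |q|) : fenchel (fun y : H => φ ‖y‖) u ≤ fenchel φ q := by
  refine le_trans (iSup_le fun z => le_trans ?_ (coe_inner_sub_le_fenchel ‖z‖ ‖u‖))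
    (le_of_abs_le_abs (convex_epi_fenchel φ) (fenchel_neg heven) (by rwa [abs_norm]))
  have h : ⟪z, u⟫ ≤ ⟪‖z‖, ‖u‖⟫ := by simpa [mul_comm] using real_inner_le_norm z u
  exact EReal.sub_le_sub (EReal.coe_le_coe_iff.2 h) le_rfl

theorem sub_smul_div_norm_smul (γ q : ℝ) (x : H) :
    x - γ • (q / ‖x‖) • x = (1 - γ * q / ‖x‖) • x := by
  rw [smul_smul, sub_smul, one_smul, mul_div_assoc]

theorem recFn_comp_norm_sub_smul_le (hbot : ∀ ξ, φ ξ ≠ ⊥) (hcvx : Convex ℝ (epi φ))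
    (heven : ∀ ξ, φ (-ξ) = φ ξ) (h0 : φ 0 ≠ ⊤) {γ q : ℝ} (hγ : 0 < γ) {x : H}
    (hq : IsProj (closure (edom (fenchel φ))) (‖x‖ / γ) q) :
    recFn (fun y : H => φ ‖y‖) (x - γ • (q / ‖x‖) • x)
      ≤ ⟪x - γ • (q / ‖x‖) • x, (q / ‖x‖) • x⟫ := by
  have hC := (convex_edom_of_convex_epi (convex_epi_fenchel φ)).closure.ordConnected
  have h0C := zero_mem_closure_edom_fenchel heven hq.1
  have hp := sub_smul_div_norm_smul γ q x
  rcases lt_or_ge q (‖x‖ / γ) with hqd | hdq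
  · have hq0 : 0 ≤ q := hq.le_of_lt hC hqd h0C
    have hx : 0 < ‖x‖ := by
      by_contra! h
      simp [norm_le_zero_iff.1 h] at hqd
      linarith
    have hκ : 0 ≤ 1 - γ * q / ‖x‖ := by
      rw [sub_nonneg, div_le_one hx, mul_comm, ← le_div_iff₀ hγ]
      exact hqd.le
    have hinner : ⟪x - γ • (q / ‖x‖) • x, (q / ‖x‖) • x⟫ = q * ‖x - γ • (q / ‖x‖) • x‖ := by
      rw [hp, real_inner_smul_left, real_inner_smul_right, real_inner_self_eq_norm_sq,
        norm_smul, Real.norm_of_nonneg hκ]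
      field_simp
    rw [hinner]
    exact recFn_comp_norm_le_of_isProj_lt hbot hcvx heven h0 hq hqd _
  · have hqd : q = ‖x‖ / γ := hq.eq_of_mem (hC.out h0C hq.1 ⟨by positivity, hdq⟩)
    have hp0 : x - γ • (q / ‖x‖) • x = 0 := by
      rcases eq_or_ne x 0 with rfl | hx
      · simp
      · rw [hp, hqd]
        field_simp
        simp
    rw [hp0, inner_zero_left]
    exact_mod_cast recFn_zero_le _

theorem norm_div_norm_smul_le (q : ℝ) (x : H) : ‖(q / ‖x‖) • x‖ ≤ |q| := by
  rcases eq_or_ne x 0 with rfl | hx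
  · simp
  · rw [norm_smul, norm_div, norm_norm, Real.norm_eq_abs,
      div_mul_cancel₀ _ (norm_ne_zero_iff.2 hx)]

end Radial

/-- radial case, nonpositive branch. For even `φ ∈ Γ₀(ℝ)` and
`f = φ ∘ ‖·‖`, if `η + γ φ*(P_{cl dom φ*}(‖x‖/γ)) ≤ 0` then
`prox_{γ f̃}(x,η) = ((1 - γ P_{cl dom φ*}(‖x‖/γ)/‖x‖) x, 0)` for `x ≠ 0`, and
`(0,0)` for `x = 0`. -/
theorem prox_persp_radial_of_nonpos {H : Type*} [NormedAddCommGroup H]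
    [InnerProductSpace ℝ H] (φ : ℝ → EReal) (hφ : ProperLscConvex φ)
    (heven : ∀ ξ : ℝ, φ (-ξ) = φ ξ) (γ : ℝ) (hγ : 0 < γ) (x : H) (η : ℝ) (q : ℝ)
    (hq : IsProj (closure (edom (fenchel φ))) (‖x‖ / γ) q)
    (hle : (η : EReal) + (γ : EReal) * fenchel φ q ≤ 0) :
    (x ≠ 0 → IsProx2 (persp fun y : H => φ ‖y‖) γ x η
        ((1 - γ * q / ‖x‖) • x) 0) ∧
    (x = 0 → IsProx2 (persp fun y : H => φ ‖y‖) γ x η 0 0) := by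
  obtain ⟨hbot, ⟨ξ₀, hξ₀⟩, -, hcvx⟩ := hφ
  have h0 : φ 0 ≠ ⊤ := ne_top_of_le_ne_top hξ₀ (le_of_abs_le_abs hcvx heven (by simp))
  have hη : (η : EReal) + γ * fenchel (fun y : H => φ ‖y‖) ((q / ‖x‖) • x) ≤ 0 := by
    refine le_trans ?_ hle
    gcongr
    exact fenchel_comp_norm_le_of_norm_le heven (norm_div_norm_smul_le q x)
  have hprox := isProx2_persp_sub_smul hγ (z := 0) (by simpa using h0) hη
    (recFn_comp_norm_sub_smul_le hbot hcvx heven h0 hγ hq)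
  refine ⟨fun _ => ?_, fun hx => ?_⟩
  · rwa [sub_smul_div_norm_smul] at hprox
  · subst hx
    simpa using hprox
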